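/- arXiv:1802.08811 — 7 statements merged into one kernel-verified Lean document; each statement's English description precedes it below -/
import Mathlib

section
/- Let n ≥ 3, let k be a unit modulo n of multiplicative order α ≥ 2, let i : α−1 ≥ i₁ > i₂ > ⋯ > i_r ≥ 0 be a sequence and λ : λ₁,…,λ_r nonnegative integers such that Ω(i,λ) = ℤ/nℤ. Then Ω(I(i), λ′) = ℤ/nℤ, where I(i) is the dual sequence of i and λ′ is the cyclically shifted tuple λ₂, λ₃, …, λ_r, λ₁ (so λ′_s = λ_{s+1} for 1 ≤ s ≤ r−1 and λ′_r = λ₁). -/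
/-- The set `Ω(i, λ) = { b₁k^{i₁} + ⋯ + b_r k^{i_r} mod n : |b_j| ≤ λ_j }` in `ℤ/nℤ`. -/
def OmegaSet (n : ℕ) (k : (ZMod n)ˣ) {r : ℕ} (i : Fin r → ℕ) (lam : Fin r → ℕ) :
    Set (ZMod n) :=
  { x | ∃ b : Fin r → ℤ, (∀ j, |b j| ≤ (lam j : ℤ)) ∧
      x = ∑ j, (b j : ZMod n) * ((k ^ i j : (ZMod n)ˣ) : ZMod n) }

/-- A `sequence`: a strictly decreasing tuple `α−1 ≥ i₁ > i₂ > ⋯ > i_r ≥ 0`. -/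
def IsSeq (α : ℕ) {r : ℕ} (i : Fin r → ℕ) : Prop :=
  (∀ j, i j ≤ α - 1) ∧ StrictAnti i

/-- `wt(n, k; i)`: the minimal total weight `λ₁ + ⋯ + λ_r` over tuples `λ`
with `Ω(i,λ) = ℤ/nℤ`. -/
noncomputable def wtSeq (n : ℕ) (k : (ZMod n)ˣ) {r : ℕ} (i : Fin r → ℕ) : ℕ :=
  sInf { s | ∃ lam : Fin r → ℕ, OmegaSet n k i lam = Set.univ ∧ ∑ j, lam j = s }

/-- The maximal sequence `Δ : α−1 > α−2 > ⋯ > 1 > 0`. -/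
def DeltaSeq (α : ℕ) : Fin α → ℕ := fun j => α - 1 - (j : ℕ)

/-- `wt(n, k; α) := wt(n, k; Δ)`. -/
noncomputable def wtAlpha (n : ℕ) (k : (ZMod n)ˣ) (α : ℕ) : ℕ :=
  wtSeq n k (DeltaSeq α)

/-- The dual sequence `I(i) : α−(i₁−i₂) > α−(i₁−i₃) > ⋯ > α−(i₁−i_r) > 0`. -/
def dualSeq (α : ℕ) {r : ℕ} (i : Fin r → ℕ) : Fin r → ℕ :=
  fun t =>
    if h : (t : ℕ) + 1 < r then
      α - (i ⟨0, Nat.lt_of_le_of_lt (Nat.zero_le _) h⟩ - i ⟨(t : ℕ) + 1, h⟩)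
    else 0

/-- The cyclic shift `λ′ : λ₂, λ₃, …, λ_r, λ₁` of a tuple `λ : λ₁, …, λ_r`. -/
def cycShift {r : ℕ} {β : Type*} (lam : Fin r → β) : Fin r → β :=
  fun t =>
    if h : (t : ℕ) + 1 < r then lam ⟨(t : ℕ) + 1, h⟩
    else lam ⟨0, Nat.lt_of_le_of_lt (Nat.zero_le _) t.isLt⟩

/-- If `Ω(i,λ) = ℤ/nℤ`, then `Ω(I(i), λ′) = ℤ/nℤ`, where `I(i)` is the dual
sequence of `i` and `λ′` is the cyclic shift `λ₂, λ₃, …, λ_r, λ₁` of `λ`. -/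
theorem omega_dual_eq_univ (n : ℕ) (hn : 3 ≤ n) (k : (ZMod n)ˣ) (α : ℕ)
    (hα : orderOf k = α) (hα2 : 2 ≤ α) (r : ℕ) (hr : 0 < r)
    (i : Fin r → ℕ) (hi : IsSeq α i) (lam : Fin r → ℕ)
    (hΩ : OmegaSet n k i lam = Set.univ) :
    OmegaSet n k (dualSeq α i) (cycShift lam) = Set.univ := by
  obtain ⟨m, rfl⟩ : ∃ m, r = m + 1 := ⟨r - 1, by omega⟩
  have hile : ∀ j : Fin (m+1), i j ≤ α := fun j => le_trans (hi.1 j) (Nat.sub_le _ _)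
  have hkα : (k : (ZMod n)ˣ) ^ α = 1 := by rw [← hα]; exact pow_orderOf_eq_one k
  ext x
  simp only [Set.mem_univ, iff_true]
  have hx : (x * (((k ^ (α - i ⟨0, Nat.succ_pos m⟩))⁻¹ : (ZMod n)ˣ) : ZMod n)) ∈
      OmegaSet n k i lam := by rw [hΩ]; trivial
  obtain ⟨b, hb, heq⟩ := hx
  refine ⟨cycShift b, ?_, ?_⟩
  · intro t
    unfold cycShift
    split_ifs with h
    · exact hb _
    · exact hb _
  · have hx2 : x = (∑ j, (b j : ZMod n) * ((k ^ i j : (ZMod n)ˣ) : ZMod n)) *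
        ((k ^ (α - i ⟨0, Nat.succ_pos m⟩) : (ZMod n)ˣ) : ZMod n) := by
      rw [← heq, mul_assoc, ← Units.val_mul, inv_mul_cancel, Units.val_one, mul_one]
    rw [hx2, Finset.sum_mul]
    refine (Fintype.sum_equiv (finRotate (m+1))
      (fun t => ((cycShift b t : ℤ) : ZMod n) * ((k ^ dualSeq α i t : (ZMod n)ˣ) : ZMod n))
      _ ?_).symm
    intro t
    rw [finRotate_succ_apply]
    unfold cycShift dualSeq
    by_cases h : (t : ℕ) + 1 < m + 1
    · have ht1 : (t + 1 : Fin (m+1)) = ⟨(t : ℕ) + 1, h⟩ := by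
        apply Fin.ext
        rw [Fin.val_add_one]
        have : t ≠ Fin.last m := by
          intro he; rw [he] at h; simp [Fin.last] at h
        simp [this]
      simp only [dif_pos h, ht1]
      have h1 : i ⟨(t:ℕ)+1, h⟩ < i ⟨0, Nat.succ_pos m⟩ :=
        hi.2 (Fin.mk_lt_mk.mpr (Nat.succ_pos _))
      have h2 := hile ⟨0, Nat.succ_pos m⟩
      have hexp : α - (i ⟨0, Nat.succ_pos m⟩ - i ⟨(t:ℕ)+1, h⟩) =
          i ⟨(t:ℕ)+1, h⟩ + (α - i ⟨0, Nat.succ_pos m⟩) := by omega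
      rw [hexp, pow_add, Units.val_mul, mul_assoc]
    · have ht : (t : ℕ) = m := by have := t.isLt; omega
      have ht1 : (t + 1 : Fin (m+1)) = ⟨0, Nat.succ_pos m⟩ := by
        apply Fin.ext
        rw [Fin.val_add_one]
        have : t = Fin.last m := Fin.ext ht
        simp [this]
      simp only [dif_neg h, ht1]
      have h2 := hile ⟨0, Nat.succ_pos m⟩
      rw [mul_assoc, ← Units.val_mul, ← pow_add,
        show i ⟨0, Nat.succ_pos m⟩ + (α - i ⟨0, Nat.succ_pos m⟩) = α by omega, hkα, pow_zero]
end

section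
/- Let n ≥ 3, let k be a unit modulo n of multiplicative order α ≥ 2, and let i : α−1 ≥ i₁ > i₂ > ⋯ > i_r ≥ 0 be a sequence. Then wt(n,k;i) = wt(n,k;I(i)), where I(i) is the dual sequence of i. -/
/-!
Multiplication by the unit `k^(α - i₁) = k^(-i₁)` sends `k^(i_{j+1})` to `k^(α - (i₁ - i_{j+1}))`
and `k^(i₁)` to `k^0`, so it maps `Ω(i, λ)` bijectively onto `Ω(I(i), λ′)`, where `λ′` is the
cyclic shift of `λ`. Hence `Ω(i, λ)` covers `ℤ/nℤ` iff `Ω(I(i), λ′)` does, and `λ′` has the same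
weight as `λ`.
-/

open scoped Pointwise

lemma pow_dualSeq {G : Type*} [Monoid G] {k : G} {α m : ℕ} (hk : k ^ α = 1)
    {i : Fin (m + 1) → ℕ} (hi : IsSeq α i) (t : Fin (m + 1)) :
    k ^ dualSeq α i t = k ^ (α - i 0) * k ^ i (finRotate (m + 1) t) := by
  have hi₀ : i 0 ≤ α := (hi.1 0).trans (Nat.sub_le α 1)
  unfold dualSeq
  split_ifs with ht
  · have hrot : finRotate (m + 1) t = ⟨t + 1, ht⟩ :=
      Fin.ext (coe_finRotate_of_ne_last (Fin.ne_of_lt (Fin.mk_lt_mk.mpr (by omega))))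
    have hle : i ⟨t + 1, ht⟩ ≤ i 0 := hi.2.antitone (Fin.zero_le _)
    rw [Fin.zero_eta, hrot, ← pow_add]
    congr 1
    omega
  · have hrot : finRotate (m + 1) t = 0 := by
      rw [show t = Fin.last m from Fin.ext (by rw [Fin.val_last]; omega), finRotate_last]
    rw [hrot, ← pow_add, Nat.sub_add_cancel hi₀, hk, pow_zero]

lemma OmegaSet_comp_equiv {n r : ℕ} (k : (ZMod n)ˣ) (e : Fin r ≃ Fin r) (i lam : Fin r → ℕ) :
    OmegaSet n k (i ∘ e) (lam ∘ e) = OmegaSet n k i lam := by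
  ext x
  constructor
  · rintro ⟨b, hb, rfl⟩
    refine ⟨b ∘ e.symm, fun j => by simpa using hb (e.symm j), ?_⟩
    conv_rhs => rw [← e.sum_comp]
    simp only [Function.comp_apply, Equiv.symm_apply_apply]
  · rintro ⟨b, hb, rfl⟩
    exact ⟨b ∘ e, fun j => hb (e j),
      (e.sum_comp fun j => (b j : ZMod n) * ((k ^ i j : (ZMod n)ˣ) : ZMod n)).symm⟩

lemma OmegaSet_eq_smul_of_pow_eq_mul {n r : ℕ} {k u : (ZMod n)ˣ} {i i' : Fin r → ℕ}
    (h : ∀ t, k ^ i' t = u * k ^ i t) (lam : Fin r → ℕ) :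
    OmegaSet n k i' lam = u • OmegaSet n k i lam := by
  have hsum (b : Fin r → ℤ) : ∑ j, (b j : ZMod n) * ((k ^ i' j : (ZMod n)ˣ) : ZMod n) =
      u • ∑ j, (b j : ZMod n) * ((k ^ i j : (ZMod n)ˣ) : ZMod n) := by
    rw [Units.smul_def, smul_eq_mul, Finset.mul_sum]
    exact Finset.sum_congr rfl fun j _ => by rw [h, Units.val_mul]; ring
  ext x
  simp only [Set.mem_smul_set, OmegaSet, Set.mem_ofPred_eq]
  constructor
  · rintro ⟨b, hb, rfl⟩
    exact ⟨_, ⟨b, hb, rfl⟩, (hsum b).symm⟩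
  · rintro ⟨_, ⟨b, hb, rfl⟩, rfl⟩
    exact ⟨b, hb, (hsum b).symm⟩

lemma wtSeq_comp_equiv {n r : ℕ} (k : (ZMod n)ˣ) (e : Fin r ≃ Fin r) (i : Fin r → ℕ) :
    wtSeq n k (i ∘ e) = wtSeq n k i := by
  unfold wtSeq
  congr 1
  ext s
  constructor
  · rintro ⟨lam, hΩ, rfl⟩
    refine ⟨lam ∘ e.symm, ?_, e.symm.sum_comp lam⟩
    rwa [← OmegaSet_comp_equiv k e, Function.comp_assoc, e.symm_comp_self, Function.comp_id]
  · rintro ⟨lam, hΩ, rfl⟩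
    exact ⟨lam ∘ e, by rwa [OmegaSet_comp_equiv], e.sum_comp lam⟩

lemma wtSeq_eq_of_pow_eq_mul {n r : ℕ} {k u : (ZMod n)ˣ} {i i' : Fin r → ℕ}
    (h : ∀ t, k ^ i' t = u * k ^ i t) :
    wtSeq n k i' = wtSeq n k i := by
  simp only [wtSeq, OmegaSet_eq_smul_of_pow_eq_mul h, Set.smul_set_eq_univ]

theorem wtSeq_dualSeq_eq_general (n : ℕ) (k : (ZMod n)ˣ) (α : ℕ)
    (hα : orderOf k = α) (r : ℕ)
    (i : Fin r → ℕ) (hi : IsSeq α i) :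
    wtSeq n k i = wtSeq n k (dualSeq α i) := by
  cases r with
  | zero => exact congrArg _ (Subsingleton.elim _ _)
  | succ m =>
    have hk : k ^ α = 1 := hα ▸ pow_orderOf_eq_one k
    rw [wtSeq_eq_of_pow_eq_mul (pow_dualSeq hk hi)]
    exact (wtSeq_comp_equiv k _ i).symm

/-- `wt(n,k;i) = wt(n,k;I(i))`, where `I(i)` is the dual sequence of `i`. -/
theorem wtSeq_dualSeq_eq (n : ℕ) (hn : 3 ≤ n) (k : (ZMod n)ˣ) (α : ℕ)
    (hα : orderOf k = α) (hα2 : 2 ≤ α) (r : ℕ) (hr : 0 < r)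
    (i : Fin r → ℕ) (hi : IsSeq α i) :
    wtSeq n k i = wtSeq n k (dualSeq α i) :=
  wtSeq_dualSeq_eq_general n k α hα r i hi
end

section
/- Let n ≥ 3 and let k be a unit modulo n of multiplicative order α ≥ 2. Given integers b₁,…,b_t and c₁,…,c_t, there exist integers b′₁,…,b′_t such that: (i) the formal sum w(b′,c) = Σ_j b′_j k^{c_j} is primal; (ii) Σ_j b′_j k^{c_j} ≡ Σ_j b_j k^{c_j} (mod n); (iii) Σ_j |b′_j| ≤ Σ_j |b_j|; and (iv) Σ_j |b′_j| ≤ wt(n,k;i_c), where i_c is the sequence listing in strictly decreasing order the distinct residues modulo α of c₁,…,c_t. -/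
lemma omega_univ_aux (n : ℕ) [NeZero n] (k : (ZMod n)ˣ) {r : ℕ} (hr : 0 < r) (i : Fin r → ℕ) :
    OmegaSet n k i (fun _ => n) = Set.univ := by
  ext x
  simp only [OmegaSet, Set.mem_setOf_eq, Set.mem_univ, iff_true]
  set u : (ZMod n)ˣ := k ^ i ⟨0, hr⟩ with hu
  set z : ZMod n := x * ((u⁻¹ : (ZMod n)ˣ) : ZMod n) with hz
  refine ⟨fun m => if m = ⟨0, hr⟩ then (z.val : ℤ) else 0, fun m => ?_, ?_⟩
  · beta_reduce
    rcases eq_or_ne m ⟨0, hr⟩ with h | h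
    · rw [if_pos h, abs_of_nonneg (Int.natCast_nonneg _)]
      exact_mod_cast (ZMod.val_lt z).le
    · rw [if_neg h]
      positivity
  · rw [Finset.sum_eq_single (⟨0, hr⟩ : Fin r)]
    · beta_reduce
      rw [if_pos rfl]
      have h1 : ((z.val : ℤ) : ZMod n) = z := by
        rw [Int.cast_natCast, ZMod.natCast_val, ZMod.cast_id]
      rw [h1, hz, ← hu]
      exact (Units.inv_mul_cancel_right x u).symm
    · intro m _ hm
      beta_reduce
      rw [if_neg hm, Int.cast_zero, zero_mul]
    · simp

lemma fiber_value_aux {n t s : ℕ} (k : (ZMod n)ˣ) (c : Fin t → ℤ) (g : Fin s → Fin t)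
    (d : Fin s → ℤ) :
    ∑ j, (((∑ m ∈ Finset.univ.filter (fun m => g m = j), d m : ℤ)) : ZMod n)
        * ((k ^ c j : (ZMod n)ˣ) : ZMod n)
      = ∑ m, (d m : ZMod n) * ((k ^ c (g m) : (ZMod n)ˣ) : ZMod n) := by
  rw [← Finset.sum_fiberwise_of_maps_to (fun m _ => Finset.mem_univ (g m))
        (fun m => (d m : ZMod n) * ((k ^ c (g m) : (ZMod n)ˣ) : ZMod n))]
  refine Finset.sum_congr rfl fun j _ => ?_
  push_cast
  rw [Finset.sum_mul]
  refine Finset.sum_congr rfl fun m hm => ?_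
  have hgm : g m = j := (Finset.mem_filter.mp hm).2
  rw [hgm]

lemma fiber_acs_aux {t s : ℕ} (g : Fin s → Fin t) (d : Fin s → ℤ) :
    ∑ j, |∑ m ∈ Finset.univ.filter (fun m => g m = j), d m| ≤ ∑ m, |d m| := by
  calc ∑ j, |∑ m ∈ Finset.univ.filter (fun m => g m = j), d m|
      ≤ ∑ j, ∑ m ∈ Finset.univ.filter (fun m => g m = j), |d m| :=
        Finset.sum_le_sum fun j _ => Finset.abs_sum_le_sum_abs _ _
    _ = ∑ m, |d m| :=
        Finset.sum_fiberwise_of_maps_to (fun m _ => Finset.mem_univ (g m)) _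

lemma fiber_support_aux {t s : ℕ} (g : Fin s → Fin t) (d : Fin s → ℤ) (j : Fin t)
    (h : (∑ m ∈ Finset.univ.filter (fun m => g m = j), d m) ≠ 0) : ∃ m, g m = j := by
  by_contra hc
  push_neg at hc
  apply h
  have he : Finset.univ.filter (fun m => g m = j) = ∅ := by
    ext m; simp [hc m]
  rw [he, Finset.sum_empty]

/-- First reduction step: any formal sum `Σ_j b_j k^{c_j}` can be replaced by a
primal formal sum `Σ_j b′_j k^{c_j}` with the same value mod `n`, with no
larger absolute coefficient sum, and with absolute coefficient sum bounded by
`wt(n,k;i_c)`, where `i_c` is the sequence listing in decreasing order the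
distinct residues mod `α` of `c₁, …, c_t`. -/
theorem first_reduction_step (n : ℕ) (hn : 3 ≤ n) (k : (ZMod n)ˣ) (α : ℕ)
    (hα : orderOf k = α) (hα2 : 2 ≤ α) (t : ℕ) (b c : Fin t → ℤ) :
    ∃ b' : Fin t → ℤ,
      (∀ j j' : Fin t, j ≠ j' → c j ≡ c j' [ZMOD (α : ℤ)] → b' j = 0 ∨ b' j' = 0) ∧
      (∑ j, (b' j : ZMod n) * ((k ^ c j : (ZMod n)ˣ) : ZMod n)
        = ∑ j, (b j : ZMod n) * ((k ^ c j : (ZMod n)ˣ) : ZMod n)) ∧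
      (∑ j, |b' j|) ≤ (∑ j, |b j|) ∧
      (∀ (r : ℕ) (i : Fin r → ℕ), IsSeq α i →
        Set.range i = { v : ℕ | ∃ j : Fin t, (c j % (α : ℤ)).toNat = v } →
        (∑ j, |b' j|) ≤ (wtSeq n k i : ℤ)) := by
  classical
  haveI : NeZero n := ⟨by omega⟩
  have hα0 : 0 < α := by omega
  have hk : ∀ x y : ℤ, x % (α : ℤ) = y % (α : ℤ) → (k ^ x) = (k ^ y) := fun x y h => by
    rw [zpow_eq_zpow_iff_modEq, hα]; exact h
  -- trivial case t = 0
  rcases Nat.eq_zero_or_pos t with ht | ht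
  · subst ht
    refine ⟨b, fun j => j.elim0, rfl, le_refl _, ?_⟩
    intro r i _ _
    simp
  -- grouped construction b2
  set fib : Fin t → Finset (Fin t) :=
    fun j => Finset.univ.filter (fun j' => c j' % (α : ℤ) = c j % (α : ℤ)) with hfib
  have hfib_mem : ∀ j, j ∈ fib j := fun j => by simp [hfib]
  set rep : Fin t → Fin t := fun j => (fib j).min' ⟨j, hfib_mem j⟩ with hrep
  have hfib_congr : ∀ j j', c j % (α : ℤ) = c j' % (α : ℤ) → fib j = fib j' := by
    intro j j' h; ext j''; simp [hfib, h]
  have hrep_mod : ∀ j, c (rep j) % (α : ℤ) = c j % (α : ℤ) := fun j => by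
    have h := Finset.min'_mem (fib j) ⟨j, hfib_mem j⟩
    simp only [hfib, Finset.mem_filter] at h
    exact h.2
  have hrep_congr : ∀ j j', c j % (α : ℤ) = c j' % (α : ℤ) → rep j = rep j' := by
    intro j j' h
    have hs := hfib_congr j j' h
    refine le_antisymm (Finset.min'_le _ _ ?_) (Finset.min'_le _ _ ?_)
    · rw [hs]; exact Finset.min'_mem _ _
    · rw [← hs]; exact Finset.min'_mem _ _
  have hrep_idem : ∀ j j', rep j' = j → rep j = j := by
    intro j j' h
    have h1 : c j % (α : ℤ) = c j' % (α : ℤ) := by rw [← h]; exact hrep_mod j'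
    exact (hrep_congr j j' h1).trans h
  set b2 : Fin t → ℤ := fun j => ∑ m ∈ Finset.univ.filter (fun m => rep m = j), b m with hb2
  have primal2 : ∀ j j' : Fin t, j ≠ j' → c j % (α : ℤ) = c j' % (α : ℤ) →
      b2 j = 0 ∨ b2 j' = 0 := by
    intro j j' hne h
    by_contra hc
    push_neg at hc
    obtain ⟨m, hm⟩ := fiber_support_aux rep b j hc.1
    obtain ⟨m', hm'⟩ := fiber_support_aux rep b j' hc.2
    exact hne ((hrep_idem j m hm).symm.trans
      ((hrep_congr j j' h).trans (hrep_idem j' m' hm')))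
  have val2 : ∑ j, (b2 j : ZMod n) * ((k ^ c j : (ZMod n)ˣ) : ZMod n)
      = ∑ j, (b j : ZMod n) * ((k ^ c j : (ZMod n)ˣ) : ZMod n) := by
    rw [hb2]
    rw [fiber_value_aux k c rep b]
    refine Finset.sum_congr rfl fun m _ => ?_
    rw [hk _ _ (hrep_mod m)]
  have acs2 : (∑ j, |b2 j|) ≤ ∑ j, |b j| := fiber_acs_aux rep b
  -- does a valid sequence exist?
  by_cases hP : ∃ (r : ℕ) (i : Fin r → ℕ), StrictAnti i ∧
      Set.range i = { v : ℕ | ∃ j : Fin t, (c j % (α : ℤ)).toNat = v }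
  swap
  · refine ⟨b2, primal2, val2, acs2, ?_⟩
    intro r i hseq hrange
    exact absurd ⟨r, i, hseq.2, hrange⟩ hP
  obtain ⟨r, i, hiA, hiR⟩ := hP
  -- r is positive
  have hr : 0 < r := by
    have hmem : (c ⟨0, ht⟩ % (α : ℤ)).toNat ∈ Set.range i := by
      rw [hiR]; exact ⟨⟨0, ht⟩, rfl⟩
    obtain ⟨m, -⟩ := hmem
    exact m.pos
  -- the weight is attained
  have hne : { s | ∃ lam : Fin r → ℕ, OmegaSet n k i lam = Set.univ ∧ ∑ j, lam j = s }.Nonempty :=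
    ⟨∑ _j : Fin r, n, fun _ => n, omega_univ_aux n k hr i, rfl⟩
  obtain ⟨lam, hlamU, hlamW⟩ := Nat.sInf_mem hne
  have hW : (∑ j, lam j) = wtSeq n k i := hlamW
  -- express the value in Ω(i, lam)
  have hxmem : (∑ j, (b j : ZMod n) * ((k ^ c j : (ZMod n)ˣ) : ZMod n))
      ∈ OmegaSet n k i lam := by
    rw [hlamU]; trivial
  obtain ⟨d, hd, hxd⟩ := hxmem
  -- choose representatives
  have hSm : ∀ m : Fin r, ∃ j : Fin t, (c j % (α : ℤ)).toNat = i m := fun m => by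
    have h : i m ∈ Set.range i := ⟨m, rfl⟩
    rw [hiR] at h; exact h
  choose jmap hjmap using hSm
  have hpow : ∀ m, (k ^ c (jmap m)) = k ^ (i m) := fun m => by
    have h1 : c (jmap m) % (α : ℤ) = (i m : ℤ) := by
      rw [← hjmap m, Int.toNat_of_nonneg (Int.emod_nonneg _ (by exact_mod_cast hα0.ne'))]
    have h2 : (i m : ℤ) < (α : ℤ) := by
      rw [← h1]; exact Int.emod_lt_of_pos _ (by exact_mod_cast hα0)
    rw [← zpow_natCast k (i m)]
    apply hk
    rw [h1, Int.emod_eq_of_lt (Int.natCast_nonneg _) h2]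
  set b1 : Fin t → ℤ := fun j => ∑ m ∈ Finset.univ.filter (fun m => jmap m = j), d m with hb1
  have primal1 : ∀ j j' : Fin t, j ≠ j' → c j % (α : ℤ) = c j' % (α : ℤ) →
      b1 j = 0 ∨ b1 j' = 0 := by
    intro j j' hne' h
    by_contra hc
    push_neg at hc
    obtain ⟨m, hm⟩ := fiber_support_aux jmap d j hc.1
    obtain ⟨m', hm'⟩ := fiber_support_aux jmap d j' hc.2
    have him : i m = i m' := by
      rw [← hjmap m, ← hjmap m', hm, hm', h]
    exact hne' (hm ▸ hm' ▸ congrArg jmap (hiA.injective him))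
  have val1 : ∑ j, (b1 j : ZMod n) * ((k ^ c j : (ZMod n)ˣ) : ZMod n)
      = ∑ j, (b j : ZMod n) * ((k ^ c j : (ZMod n)ˣ) : ZMod n) := by
    rw [hb1, fiber_value_aux k c jmap d, hxd]
    refine Finset.sum_congr rfl fun m _ => ?_
    rw [hpow m]
  have acs1 : (∑ j, |b1 j|) ≤ (wtSeq n k i : ℤ) := by
    calc (∑ j, |b1 j|) ≤ ∑ m, |d m| := fiber_acs_aux jmap d
      _ ≤ ∑ m, (lam m : ℤ) := Finset.sum_le_sum fun m _ => hd m
      _ = ((∑ m, lam m : ℕ) : ℤ) := by push_cast; ring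
      _ = (wtSeq n k i : ℤ) := by rw [hW]
  -- uniqueness of the sequence
  have huniq : ∀ (r' : ℕ) (i' : Fin r' → ℕ), StrictAnti i' → Set.range i' = Set.range i →
      wtSeq n k i' = wtSeq n k i := by
    intro r' i' hi'A hR
    have hcard : r' = r := by
      have h1 : Nat.card (Set.range i') = r' := by
        rw [Nat.card_range_of_injective hi'A.injective, Nat.card_eq_fintype_card,
          Fintype.card_fin]
      have h2 : Nat.card (Set.range i) = r := by
        rw [Nat.card_range_of_injective hiA.injective, Nat.card_eq_fintype_card,
          Fintype.card_fin]
      rw [← h1, hR, h2]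
    subst hcard
    rw [(StrictAnti.range_inj hi'A hiA).mp hR]
  by_cases hle : (∑ j, |b2 j|) ≤ ((wtSeq n k i : ℤ))
  · refine ⟨b2, primal2, val2, acs2, ?_⟩
    intro r' i' hseq hR
    rw [huniq r' i' hseq.2 (hR.trans hiR.symm)]
    exact hle
  · refine ⟨b1, primal1, val1, ?_, ?_⟩
    · exact le_trans (acs1.trans (le_of_lt (lt_of_not_ge hle))) acs2
    · intro r' i' hseq hR
      rw [huniq r' i' hseq.2 (hR.trans hiR.symm)]
      exact acs1
end

section
/- Let p be a prime with p ≡ 1 (mod 4) and let k be a unit modulo p of multiplicative order p−1 (a primitive root mod p). Then wt(p, k; p−1) ≤ (p+3)/4. Moreover, there exists a sequence i with deg(i) = (p−5)/4 and wt(p, k; i) ≤ (p+3)/4. -/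
/-- The degree of a sequence: its largest entry. -/
noncomputable def degSeq {r : ℕ} (i : Fin r → ℕ) : ℕ := sSup (Set.range i)

/-- The codegree of a sequence: its smallest nonzero entry. -/
noncomputable def codegSeq {r : ℕ} (i : Fin r → ℕ) : ℕ :=
  sInf { v | v ∈ Set.range i ∧ v ≠ 0 }

/-- A minimal prime sequence realizing `wt(n,k;α)`: a reduced sequence (i.e. one
containing `0`) of weight `wt(n,k;α)` such that no proper reduced subsequence
has weight `wt(n,k;α)`. -/
def IsMinimalPrimeSeq (n : ℕ) (k : (ZMod n)ˣ) (α : ℕ) {r : ℕ} (i : Fin r → ℕ) : Prop :=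
  IsSeq α i ∧ 0 ∈ Set.range i ∧ wtSeq n k i = wtAlpha n k α ∧
    ∀ (q : ℕ) (i₀ : Fin q → ℕ), IsSeq α i₀ → 0 ∈ Set.range i₀ →
      Set.range i₀ ⊆ Set.range i → Set.range i₀ ≠ Set.range i →
      wtSeq n k i₀ ≠ wtAlpha n k α

/-- `deg(n,k;α)`: the smallest degree of a minimal prime sequence realizing `wt(n,k;α)`. -/
noncomputable def degNK (n : ℕ) (k : (ZMod n)ˣ) (α : ℕ) : ℕ :=
  sInf { d | ∃ (r : ℕ) (i : Fin r → ℕ), IsMinimalPrimeSeq n k α i ∧ degSeq i = d }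

/-!
Write `p = 4m + 5` and `K` for the primitive root, so `K^(2m+2) = -1` and `2 = ±K^v` with
`v < 2m + 2`. Balanced representatives have absolute value at most `2m + 2`, so every residue is
`2a + b` with `|a| ≤ m`, `|b| ≤ 2`. If `v ≤ m` this reads `x = (±a) K^v + b`; if `v ≥ m + 2`
then `2⁻¹ = ∓K^(2m+2-v)`, and decomposing `2x` gives `x = a + b · 2⁻¹`; and `v = m + 1` gives
`4 = -1`, i.e. `p = 5`, where constants of size `2` already suffice. In every case the two
exponents `d ≤ m` and `0` cover `ℤ/pℤ` with total weight `m + 2 = (p + 3)/4`, and both `Δ` and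
the sequence `m > m - 1 > ⋯ > 0` contain them.
-/

open Finset

lemma omegaSet_eq_univ_of_comp {n q r : ℕ} {k : (ZMod n)ˣ} {i : Fin r → ℕ} {lam : Fin q → ℕ}
    (f : Fin q → Fin r) (h : OmegaSet n k (i ∘ f) lam = Set.univ) :
    OmegaSet n k i (fun j => ∑ j' with f j' = j, lam j') = Set.univ := by
  refine Set.eq_univ_of_forall fun x => ?_
  obtain ⟨b, hb, rfl⟩ : x ∈ OmegaSet n k (i ∘ f) lam := h ▸ Set.mem_univ x
  refine ⟨fun j => ∑ j' with f j' = j, b j', fun j => ?_, ?_⟩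
  · calc |∑ j' with f j' = j, b j'| ≤ ∑ j' with f j' = j, |b j'| := abs_sum_le_sum_abs _ _
      _ ≤ ∑ j' with f j' = j, (lam j' : ℤ) := sum_le_sum fun j' _ => hb j'
      _ = _ := by push_cast; rfl
  · rw [← sum_fiberwise univ f]
    refine sum_congr rfl fun j _ => ?_
    push_cast
    rw [sum_mul]
    exact sum_congr rfl fun j' hj' => by rw [Function.comp_apply, (mem_filter.mp hj').2]

lemma wtSeq_le_of_range_subset {n q r : ℕ} {k : (ZMod n)ˣ} {i : Fin r → ℕ} {i' : Fin q → ℕ}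
    {lam : Fin q → ℕ} (hsub : Set.range i' ⊆ Set.range i)
    (hlam : OmegaSet n k i' lam = Set.univ) :
    wtSeq n k i ≤ ∑ j, lam j := by
  choose f hf using fun j => hsub ⟨j, rfl⟩
  obtain rfl : i ∘ f = i' := funext hf
  exact Nat.sInf_le ⟨_, omegaSet_eq_univ_of_comp f hlam, sum_fiberwise univ f lam⟩

lemma mem_range_deltaSeq {α v : ℕ} (h : v < α) : v ∈ Set.range (DeltaSeq α) :=
  ⟨⟨α - 1 - v, by omega⟩, by simp only [DeltaSeq]; omega⟩

lemma isSeq_deltaSeq {α β : ℕ} (h : β ≤ α) : IsSeq α (DeltaSeq β) :=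
  ⟨fun j => by simp only [DeltaSeq]; omega, fun a b hab => by
    have : (a : ℕ) < b := hab
    simp only [DeltaSeq]; omega⟩

lemma degSeq_deltaSeq (β : ℕ) : degSeq (DeltaSeq (β + 1)) = β := by
  refine IsGreatest.csSup_eq ⟨⟨0, by simp [DeltaSeq]⟩, ?_⟩
  rintro _ ⟨j, rfl⟩
  simp only [DeltaSeq]; omega

lemma exists_eq_two_mul_add_of_abs_le {m : ℕ} {y : ℤ} (hy : |y| ≤ 2 * m + 2) :
    ∃ a b : ℤ, |a| ≤ m ∧ |b| ≤ 2 ∧ y = 2 * a + b := by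
  refine ⟨max (-m : ℤ) (min (m : ℤ) (y / 2)), y - 2 * max (-m : ℤ) (min (m : ℤ) (y / 2)), ?_, ?_,
    by ring⟩ <;>
  · rw [abs_le] at *; omega

lemma ZMod.exists_eq_two_mul_add {n m : ℕ} [NeZero n] (hn : n / 2 ≤ 2 * m + 2) (x : ZMod n) :
    ∃ a b : ℤ, |a| ≤ m ∧ |b| ≤ 2 ∧ x = 2 * a + b := by
  have hx : |x.valMinAbs| ≤ 2 * m + 2 := by
    rw [Int.abs_eq_natAbs]
    exact_mod_cast x.natAbs_valMinAbs_le.trans hn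
  obtain ⟨a, b, ha, hb, hab⟩ := exists_eq_two_mul_add_of_abs_le hx
  exact ⟨a, b, ha, hb, by rw [← x.coe_valMinAbs, hab]; push_cast; ring⟩

lemma pow_eq_neg_one_pow_mul_pow_mod {R : Type*} [Ring R] {K : R} {N : ℕ} (hK : K ^ N = -1)
    (u : ℕ) : K ^ u = (-1) ^ (u / N) * K ^ (u % N) := by
  conv_lhs => rw [← Nat.div_add_mod u N, pow_add, pow_mul, hK]

section Cover

variable {n : ℕ} {k : (ZMod n)ˣ}

lemma omegaSet_pair_eq_univ {d l₁ l₀ : ℕ}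
    (h : ∀ x : ZMod n, ∃ c₁ c₀ : ℤ, |c₁| ≤ l₁ ∧ |c₀| ≤ l₀ ∧ x = c₁ * (k : ZMod n) ^ d + c₀) :
    OmegaSet n k ![d, 0] ![l₁, l₀] = Set.univ := by
  refine Set.eq_univ_of_forall fun x => ?_
  obtain ⟨c₁, c₀, h₁, h₀, hx⟩ := h x
  refine ⟨![c₁, c₀], fun j => ?_, ?_⟩
  · fin_cases j <;> assumption
  · simp [Fin.sum_univ_two, hx]

variable [NeZero n] {m d : ℕ} {ε : ℤ}

lemma omegaSet_pair_eq_univ_of_two_eq (hn : n / 2 ≤ 2 * m + 2) (hε : |ε| = 1)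
    (h2 : (2 : ZMod n) = ε * (k : ZMod n) ^ d) :
    OmegaSet n k ![d, 0] ![m, 2] = Set.univ := by
  refine omegaSet_pair_eq_univ fun x => ?_
  obtain ⟨a, b, ha, hb, hx⟩ := ZMod.exists_eq_two_mul_add hn x
  exact ⟨ε * a, b, by rwa [abs_mul, hε, one_mul], hb, by rw [hx, h2]; push_cast; ring⟩

lemma omegaSet_pair_eq_univ_of_two_mul_eq_one (hn : n / 2 ≤ 2 * m + 2) (hε : |ε| = 1)
    (h2 : 2 * (ε * (k : ZMod n) ^ d) = 1) :
    OmegaSet n k ![d, 0] ![2, m] = Set.univ := by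
  refine omegaSet_pair_eq_univ fun x => ?_
  obtain ⟨a, b, ha, hb, hx⟩ := ZMod.exists_eq_two_mul_add hn (2 * x)
  refine ⟨ε * b, a, by rwa [abs_mul, hε, one_mul], ha, ?_⟩
  push_cast
  linear_combination (a - x) * h2 + ε * (k : ZMod n) ^ d * hx

lemma omegaSet_pair_eq_univ_of_half_le {l : ℕ} (hn : n / 2 ≤ l) :
    OmegaSet n k ![d, 0] ![0, l] = Set.univ := by
  refine omegaSet_pair_eq_univ fun x => ⟨0, x.valMinAbs, by simp, ?_, by simp [ZMod.coe_valMinAbs]⟩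
  rw [Int.abs_eq_natAbs]
  exact_mod_cast x.natAbs_valMinAbs_le.trans hn

end Cover

lemma exists_omegaSet_pair_eq_univ {p m : ℕ} [Fact p.Prime] (hpm : p = 4 * m + 5)
    {k : (ZMod p)ˣ} (hk : orderOf k = p - 1) :
    ∃ d ≤ m, ∃ l₁ l₀, l₁ + l₀ = m + 2 ∧ OmegaSet p k ![d, 0] ![l₁, l₀] = Set.univ := by
  set K : ZMod p := (k : ZMod p)
  have hn : p / 2 ≤ 2 * m + 2 := by omega
  have hζ : IsPrimitiveRoot K ((2 * m + 2) * 2) :=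
    IsPrimitiveRoot.coe_units_iff.mpr (by convert IsPrimitiveRoot.orderOf k using 1; omega)
  have hK : K ^ (2 * m + 2) = -1 := by
    have := hζ.pow_of_dvd (by omega) (dvd_mul_right _ 2)
    rw [Nat.mul_div_cancel_left _ (by omega)] at this
    exact this.eq_neg_one_of_two_right
  have h2 : (2 : ZMod p) ≠ 0 := by
    intro h
    have := Nat.le_of_dvd two_pos ((ZMod.natCast_eq_zero_iff 2 p).mp (by exact_mod_cast h))
    omega
  obtain ⟨u, -, hu⟩ := hζ.eq_pow_of_pow_eq_one (ξ := 2)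
    (by rw [show (2 * m + 2) * 2 = p - 1 by omega]; exact ZMod.pow_card_sub_one_eq_one h2)
  set ε : ℤ := (-1) ^ (u / (2 * m + 2))
  set v := u % (2 * m + 2)
  have hvN : v < 2 * m + 2 := Nat.mod_lt _ (by omega)
  have hε : |ε| = 1 := by simp [ε]
  have hεε : (ε : ZMod p) * ε = 1 := by
    have : ε * ε = 1 := by simp [ε, ← mul_pow]
    rw [← Int.cast_mul, this, Int.cast_one]
  have h2v : (2 : ZMod p) = ε * K ^ v := by
    rw [← hu, pow_eq_neg_one_pow_mul_pow_mod hK]; push_cast [ε]; rfl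
  rcases lt_trichotomy v (m + 1) with hv | hv | hv
  · exact ⟨v, by omega, m, 2, rfl, omegaSet_pair_eq_univ_of_two_eq hn hε h2v⟩
  · -- `4 = K^(2m+2) = -1`, so `p ∣ 5`
    have h5 : ((5 : ℕ) : ZMod p) = 0 := by
      have : K ^ v * K ^ v = -1 := by rw [← pow_add, show v + v = 2 * m + 2 by omega, hK]
      push_cast
      linear_combination (2 + ε * K ^ v) * h2v + K ^ v * K ^ v * hεε + this
    have := Nat.le_of_dvd (by norm_num) ((ZMod.natCast_eq_zero_iff 5 p).mp h5)
    exact ⟨0, by omega, 0, m + 2, by omega, omegaSet_pair_eq_univ_of_half_le (by omega)⟩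
  · refine ⟨2 * m + 2 - v, by omega, 2, m, by omega,
      omegaSet_pair_eq_univ_of_two_mul_eq_one (ε := -ε) hn (by rwa [abs_neg]) ?_⟩
    have : K ^ v * K ^ (2 * m + 2 - v) = -1 := by rw [← pow_add, Nat.add_sub_cancel' hvN.le, hK]
    push_cast
    linear_combination (-ε * K ^ (2 * m + 2 - v)) * h2v - ε * ε * this + hεε

/-- If `p ≡ 1 (mod 4)` is prime and `k` is a primitive root mod `p`, then
`wt(p, k; p−1) ≤ (p+3)/4`, and moreover there is a sequence `i` of degree
`(p−5)/4` with `wt(p, k; i) ≤ (p+3)/4`. -/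
theorem wt_prime_one_mod_four (p : ℕ) (hp : p.Prime) (hp1 : p % 4 = 1)
    (k : (ZMod p)ˣ) (hk : orderOf k = p - 1) :
    wtAlpha p k (p - 1) ≤ (p + 3) / 4 ∧
    ∃ (r : ℕ) (i : Fin r → ℕ), 0 < r ∧ IsSeq (p - 1) i ∧
      degSeq i = (p - 5) / 4 ∧ wtSeq p k i ≤ (p + 3) / 4 := by
  have := Fact.mk hp
  obtain ⟨m, hpm⟩ : ∃ m, p = 4 * m + 5 := ⟨(p - 5) / 4, by have := hp.two_le; omega⟩
  obtain ⟨d, hdm, l₁, l₀, hl, hcov⟩ := exists_omegaSet_pair_eq_univ hpm hk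
  have hwt {β : ℕ} (hβ : m < β) : wtSeq p k (DeltaSeq β) ≤ (p + 3) / 4 := by
    have hsub : Set.range ![d, 0] ⊆ Set.range (DeltaSeq β) := Set.range_subset_iff.mpr fun j => by
      fin_cases j <;> exact mem_range_deltaSeq (by simp; omega)
    refine (wtSeq_le_of_range_subset hsub hcov).trans ?_
    simp only [Fin.sum_univ_two, Matrix.cons_val_zero, Matrix.cons_val_one]
    omega
  refine ⟨hwt (by omega), m + 1, DeltaSeq (m + 1), by omega, isSeq_deltaSeq (by omega), ?_,
    hwt (by omega)⟩
  rw [degSeq_deltaSeq]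
  omega
end

section
/- Let p be an odd prime and let k be a unit modulo p of multiplicative order p−1 (a primitive root mod p). If p ≡ 1 (mod 4), set A = { k^j mod p : 0 ≤ j ≤ (p−5)/4 }; if p ≡ 3 (mod 4), set A = { k^j mod p : 0 ≤ j ≤ (p−3)/4 }. If 2 mod p belongs to A ∪ (−A), then wt(p, k; p−1) ≤ (p−1)/4 when p ≡ 1 (mod 4), and wt(p, k; p−1) ≤ (p+1)/4 when p ≡ 3 (mod 4). -/

-- signed binary digits
lemma digits_lemma : ∀ (w : ℕ) (x : ℤ), |x| ≤ 2 ^ w - 1 →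
    ∃ ε : ℕ → ℤ, (∀ i, |ε i| ≤ 1) ∧ ∑ i ∈ Finset.range w, ε i * 2 ^ i = x := by
  intro w
  induction w with
  | zero =>
    intro x hx
    refine ⟨fun _ => 0, fun i => by simp, ?_⟩
    simp at hx ⊢
    omega
  | succ w ih =>
    intro x hx
    have h2P : (2 : ℤ) ^ (w + 1) = 2 * 2 ^ w := by ring
    rw [abs_le] at hx
    have hPpos : (1 : ℤ) ≤ 2 ^ w := one_le_pow₀ (by norm_num)
    obtain ⟨e0, y, hxy, he0, hy1, hy2⟩ :
        ∃ e0 y : ℤ, x = 2 * y + e0 ∧ |e0| ≤ 1 ∧ -(2 ^ w - 1) ≤ y ∧ y ≤ 2 ^ w - 1 := by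
      rcases le_or_gt 0 x with h | h
      · refine ⟨x % 2, x / 2, by omega, by rw [abs_le]; omega, by omega, by omega⟩
      · refine ⟨-((-x) % 2), -((-x) / 2), by omega, by rw [abs_le]; omega, by omega, by omega⟩
    obtain ⟨ε', hε', hsum⟩ := ih y (abs_le.mpr ⟨by omega, by omega⟩)
    refine ⟨fun i => if i = 0 then e0 else ε' (i - 1), fun i => by dsimp; split <;> [exact he0; exact hε' _], ?_⟩
    rw [Finset.sum_range_succ']
    simp only [if_pos rfl]
    have : ∀ i ∈ Finset.range w, (if i + 1 = 0 then e0 else ε' (i + 1 - 1)) * 2 ^ (i + 1)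
        = (ε' i * 2 ^ i) * 2 := by
      intro i _
      simp [pow_succ]
      ring
    rw [Finset.sum_congr rfl this, ← Finset.sum_mul, hsum]
    simp [hxy]
    ring

lemma two_mul_le_pow (w : ℕ) : 2 * w ≤ 2 ^ w := by
  induction w with
  | zero => simp
  | succ n ih => have := Nat.one_le_two_pow (n := n); rw [pow_succ]; omega

lemma two_mul_add_one_le_pow {w : ℕ} (hw : 3 ≤ w) : 2 * w + 1 ≤ 2 ^ w := by
  induction w with
  | zero => omega
  | succ n ih =>
    rcases Nat.lt_or_ge n 3 with h | h
    · interval_cases n <;> simp_all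
    · have := ih (by omega); rw [pow_succ]; omega

lemma wt_le_of_pow2 (p : ℕ) (hp : p.Prime) (hodd : Odd p) (k : (ZMod p)ˣ)
    (hk : orderOf k = p - 1) (w : ℕ) (hw : (p - 1) / 2 ≤ 2 ^ w - 1) (hw1 : 1 ≤ w) :
    wtAlpha p k (p - 1) ≤ w := by
  haveI : Fact p.Prime := ⟨hp⟩
  have hp3 : 3 ≤ p := by
    have h1 := Nat.odd_iff.mp hodd
    have h2 := hp.two_le
    omega
  set N := p - 1 with hN
  have hN2 : 2 ≤ N := by omega
  -- 2 is a power of k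
  have hcop : Nat.Coprime 2 p :=
    (Nat.coprime_primes Nat.prime_two hp).mpr (by rintro rfl; exact absurd (Nat.odd_iff.mp hodd) (by norm_num))
  set u : (ZMod p)ˣ := ZMod.unitOfCoprime 2 hcop with hu
  have hcard : Fintype.card (ZMod p)ˣ = N := by
    rw [ZMod.card_units_eq_totient, Nat.totient_prime hp]
  have htop : Subgroup.zpowers k = ⊤ := by
    apply Subgroup.eq_top_of_card_eq
    rw [Nat.card_eq_fintype_card, Fintype.card_zpowers, hk, Nat.card_eq_fintype_card, hcard]
  have hmem : u ∈ Submonoid.powers k := by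
    rw [mem_powers_iff_mem_zpowers, htop]; trivial
  obtain ⟨a, ha0⟩ := hmem
  have ha : k ^ a = u := ha0
  have ha2 : ((k ^ a : (ZMod p)ˣ) : ZMod p) = 2 := by
    rw [ha, hu, ZMod.coe_unitOfCoprime]; norm_num
  -- the fiber map
  have hmod : ∀ i : ℕ, a * i % N < N := fun i => Nat.mod_lt _ (by omega)
  set g : ℕ → Fin N := fun i => ⟨N - 1 - (a * i % N), by have := hmod i; omega⟩ with hg
  classical
  set lam : Fin N → ℕ :=
    fun j => ((Finset.range w).filter (fun i => g i = j)).card with hlam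
  have hlamsum : ∑ j, lam j = w := by
    rw [hlam]
    symm
    calc w = (Finset.range w).card := (Finset.card_range w).symm
      _ = _ := Finset.card_eq_sum_card_fiberwise (fun x _ => Finset.mem_univ (g x))
  refine le_trans (Nat.sInf_le ?_) (le_of_eq hlamsum)
  refine ⟨lam, ?_, rfl⟩
  rw [Set.eq_univ_iff_forall]
  intro x
  -- digits of valMinAbs x
  have hxabs : |x.valMinAbs| ≤ 2 ^ w - 1 := by
    have h1 := ZMod.natAbs_valMinAbs_le x
    have h2w : (1 : ℕ) ≤ 2 ^ w := Nat.one_le_two_pow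
    have hnat : x.valMinAbs.natAbs ≤ 2 ^ w - 1 :=
      calc x.valMinAbs.natAbs ≤ p / 2 := h1
        _ = (p - 1) / 2 := by have := Nat.odd_iff.mp hodd; omega
        _ ≤ 2 ^ w - 1 := hw
    calc |x.valMinAbs| = (x.valMinAbs.natAbs : ℤ) := Int.abs_eq_natAbs _
      _ ≤ ((2 ^ w - 1 : ℕ) : ℤ) := by exact_mod_cast hnat
      _ = 2 ^ w - 1 := by rw [Nat.cast_sub h2w]; push_cast; ring
  obtain ⟨ε, hε, hsum⟩ := digits_lemma w x.valMinAbs hxabs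
  refine ⟨fun j => ∑ i ∈ (Finset.range w).filter (fun i => g i = j), ε i, ?_, ?_⟩
  · intro j
    calc |∑ i ∈ (Finset.range w).filter (fun i => g i = j), ε i|
        ≤ ∑ i ∈ (Finset.range w).filter (fun i => g i = j), |ε i| :=
          Finset.abs_sum_le_sum_abs _ _
      _ ≤ ∑ _i ∈ (Finset.range w).filter (fun i => g i = j), 1 :=
          Finset.sum_le_sum (fun i _ => hε i)
      _ = (lam j : ℤ) := by simp [hlam]
  · -- the sum equals x
    have key : ∀ i : ℕ, ((k : ZMod p)) ^ (DeltaSeq N (g i)) = (2 : ZMod p) ^ i := by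
      intro i
      have hd : DeltaSeq N (g i) = a * i % N := by
        simp only [DeltaSeq, hg]
        have := hmod i
        omega
      have hmodpow : (k : (ZMod p)ˣ) ^ (a * i % N) = k ^ (a * i) := by
        rw [← hk]; exact pow_mod_orderOf k (a * i)
      calc (k : ZMod p) ^ (DeltaSeq N (g i))
          = ((k ^ (a * i % N) : (ZMod p)ˣ) : ZMod p) := by rw [hd]; push_cast; ring
        _ = (((k ^ a : (ZMod p)ˣ) : ZMod p)) ^ i := by rw [hmodpow, pow_mul]; push_cast; ring
        _ = (2 : ZMod p) ^ i := by rw [ha2]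
    have : ∑ j : Fin N, ((∑ i ∈ (Finset.range w).filter (fun i => g i = j), ε i : ℤ) : ZMod p)
          * ((k ^ (DeltaSeq N j) : (ZMod p)ˣ) : ZMod p)
        = ∑ i ∈ Finset.range w, ((ε i : ZMod p) * (2 : ZMod p) ^ i) := by
      rw [← Finset.sum_fiberwise (Finset.range w) g
        (fun i => ((ε i : ZMod p) * (2 : ZMod p) ^ i))]
      refine Finset.sum_congr rfl (fun j _ => ?_)
      push_cast
      rw [Finset.sum_mul]
      refine Finset.sum_congr rfl (fun i hi => ?_)
      have hgij : g i = j := (Finset.mem_filter.mp hi).2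
      rw [← hgij, key i]
    rw [this]
    have : ∑ i ∈ Finset.range w, ((ε i : ZMod p) * (2 : ZMod p) ^ i)
        = ((∑ i ∈ Finset.range w, ε i * 2 ^ i : ℤ) : ZMod p) := by push_cast; ring
    rw [this, hsum, ZMod.coe_valMinAbs]

/-- If `2 mod p` lies in `A ∪ (−A)`, where `A = {k^j : 0 ≤ j ≤ (p−5)/4}` when
`p ≡ 1 (mod 4)` and `A = {k^j : 0 ≤ j ≤ (p−3)/4}` when `p ≡ 3 (mod 4)`, then
`wt(p, k; p−1) ≤ (p−1)/4` in the first case and `wt(p, k; p−1) ≤ (p+1)/4` in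
the second. -/
theorem wt_prime_improved_bound (p : ℕ) (hp : p.Prime) (hodd : Odd p)
    (k : (ZMod p)ˣ) (hk : orderOf k = p - 1) (A : Set (ZMod p))
    (hA : A = { x | ∃ j : ℕ,
      j ≤ (if p % 4 = 1 then (p - 5) / 4 else (p - 3) / 4) ∧
      x = ((k ^ j : (ZMod p)ˣ) : ZMod p) })
    (h2 : (2 : ZMod p) ∈ A ∪ { x | -x ∈ A }) :
    (p % 4 = 1 → wtAlpha p k (p - 1) ≤ (p - 1) / 4) ∧
    (p % 4 = 3 → wtAlpha p k (p - 1) ≤ (p + 1) / 4) := by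
  have hp2 := hp.two_le
  have hpodd := Nat.odd_iff.mp hodd
  constructor
  · intro h1
    by_cases hp5 : p = 5
    · exfalso
      subst hp5
      rw [hA] at h2
      rcases h2 with h | h
      · obtain ⟨j, hj, hx⟩ := h
        norm_num at hj
        subst hj
        rw [pow_zero] at hx
        rw [Units.val_one] at hx
        exact absurd hx (by decide)
      · obtain ⟨j, hj, hx⟩ := h
        norm_num at hj
        subst hj
        rw [pow_zero] at hx
        rw [Units.val_one] at hx
        exact absurd hx (by decide)
    · have hge : 13 ≤ p := by
        rcases Nat.lt_or_ge p 13 with h | h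
        · exfalso
          interval_cases p <;> revert hp <;> simp_all <;> decide
        · exact h
      have hpow := two_mul_add_one_le_pow (w := (p - 1) / 4) (by omega)
      exact wt_le_of_pow2 p hp hodd k hk ((p - 1) / 4) (by omega) (by omega)
  · intro h3
    have hpow := two_mul_le_pow ((p + 1) / 4)
    exact wt_le_of_pow2 p hp hodd k hk ((p + 1) / 4) (by omega) (by omega)
end

section
/- Let p be an odd prime, let n ≥ 1, and let k be a unit modulo pⁿ of multiplicative order p^{n−1}(p−1). Then wt(pⁿ, k; p^{n−1}(p−1)) ≤ (p+3)/4 + (n−1)p if p ≡ 1 (mod 4), and wt(pⁿ, k; p^{n−1}(p−1)) ≤ (p+5)/4 + (n−1)p if p ≡ 3 (mod 4). -/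
/-!
Since `k` generates `(ℤ/pⁿℤ)ˣ`, every unit is a power `k^e` with `e < α`, so covering `ℤ/pⁿℤ`
by bounded integer combinations of arbitrary units bounds the weight by the sum of the bounds.
Take `m = ⌊(p+1)/4⌋` and the units `1`, `t = 2m - 1` and `p^j + 1` for `1 ≤ j ≤ n - 1`.
Modulo `p` every residue is `a + εt` with `|a| ≤ m`, `|ε| ≤ 1`, since `a + εt` sweeps out
`[-(3m-1), 3m-1] ⊇ [-(p-1)/2, (p-1)/2]`. The remaining multiple of `p` is expanded in balanced
base-`p` digits `c_j`, and `c_j p^j = c_j (p^j + 1) - c_j`, the corrections `-c_j` being absorbed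
by the coefficient of `1`. The weights are `m + (n-1)(p-1)/2` on `1`, `1` on `t` and `(p-1)/2`
on each `p^j + 1`, in total `m + 1 + (n-1)(p-1)`.
-/

open Finset

theorem exists_pow_lt_orderOf_eq {G : Type*} [Group G] [Finite G] {g : G}
    (hg : orderOf g = Nat.card G) (x : G) : ∃ e < orderOf g, g ^ e = x := by
  have htop : Subgroup.zpowers g = ⊤ :=
    (Subgroup.card_eq_iff_eq_top _).mp (by rw [Nat.card_zpowers, hg])
  obtain ⟨e, rfl⟩ := mem_powers_iff_mem_zpowers.mpr (htop ▸ Subgroup.mem_top x)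
  exact ⟨e % orderOf g, Nat.mod_lt _ (orderOf_pos g), pow_mod_orderOf g e⟩

theorem wtAlpha_le_of_forall_eq_sum (N : ℕ) (k : (ZMod N)ˣ) (α : ℕ) {ι : Type*} [Fintype ι]
    (U : ι → ZMod N) (w : ι → ℕ)
    (hU : ∀ l, ∃ e < α, ((k ^ e : (ZMod N)ˣ) : ZMod N) = U l)
    (hcover : ∀ x : ZMod N, ∃ c : ι → ℤ, (∀ l, |c l| ≤ w l) ∧
      x = ∑ l, (c l : ZMod N) * U l) :
    wtAlpha N k α ≤ ∑ l, w l := by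
  classical
  choose e he hkeU using hU
  -- `d l` is the position of the exponent `e l` in `Δ = (α - 1, …, 1, 0)`
  let d : ι → Fin α := fun l => ⟨α - 1 - e l, by have := he l; omega⟩
  have hd : ∀ l, DeltaSeq α (d l) = e l := fun l => by
    have := he l; simp only [DeltaSeq, d]; omega
  let lam : Fin α → ℕ := fun j => ∑ l ∈ univ.filter (d · = j), w l
  refine Nat.sInf_le ⟨lam, Set.eq_univ_of_forall fun x => ?_, sum_fiberwise univ d w⟩
  obtain ⟨c, hc, rfl⟩ := hcover x
  refine ⟨fun j => ∑ l ∈ univ.filter (d · = j), c l, fun j => ?_, ?_⟩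
  · calc |∑ l ∈ univ.filter (d · = j), c l|
        ≤ ∑ l ∈ univ.filter (d · = j), |c l| := abs_sum_le_sum_abs _ _
      _ ≤ ∑ l ∈ univ.filter (d · = j), (w l : ℤ) := sum_le_sum fun l _ => hc l
      _ = lam j := by push_cast [lam]; rfl
  · rw [← sum_fiberwise univ d]
    refine sum_congr rfl fun j _ => ?_
    push_cast
    rw [sum_mul]
    refine sum_congr rfl fun l hl => ?_
    rw [(mem_filter.mp hl).2.symm, hd, ← hkeU, Units.val_pow_eq_pow_val]

theorem exists_abs_le_half_dvd_sub {p : ℕ} (hp : 0 < p) (X : ℤ) :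
    ∃ r : ℤ, |r| ≤ (p / 2 : ℕ) ∧ (p : ℤ) ∣ X - r := by
  have : NeZero p := ⟨hp.ne'⟩
  refine ⟨(X : ZMod p).valMinAbs, ?_, ?_⟩
  · rw [Int.abs_eq_natAbs]
    exact_mod_cast ZMod.natAbs_valMinAbs_le _
  · exact (ZMod.intCast_eq_intCast_iff_dvd_sub _ _ _).mp (ZMod.coe_valMinAbs _)

theorem exists_balanced_digits {p : ℕ} (hp : 0 < p) (r : ℕ) (Y : ℤ) :
    ∃ c : Fin r → ℤ, (∀ j, |c j| ≤ (p / 2 : ℕ)) ∧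
      (p : ℤ) ^ r ∣ Y - ∑ j, c j * (p : ℤ) ^ (j : ℕ) := by
  induction r generalizing Y with
  | zero => exact ⟨Fin.elim0, Fin.rec0, by simp⟩
  | succ r ih =>
    obtain ⟨c₀, hc₀, Y', hY'⟩ := exists_abs_le_half_dvd_sub hp Y
    obtain ⟨c, hc, hdvd⟩ := ih Y'
    refine ⟨Fin.cons c₀ c, Fin.cases hc₀ hc, ?_⟩
    have hsplit : Y - ∑ j : Fin (r + 1), (Fin.cons c₀ c : Fin (r + 1) → ℤ) j * (p : ℤ) ^ (j : ℕ)
        = p * (Y' - ∑ j, c j * (p : ℤ) ^ (j : ℕ)) := by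
      rw [Fin.sum_univ_succ, mul_sub, mul_sum]
      simp only [Fin.cons_zero, Fin.cons_succ, Fin.val_zero, Fin.val_succ, pow_zero, mul_one,
        pow_succ', mul_left_comm (c _)]
      linear_combination hY'
    rw [hsplit, pow_succ']
    exact mul_dvd_mul_left _ hdvd

theorem exists_abs_le_add_mul_dvd_sub {p m t : ℕ} (hp : 0 < p) (ht : t ≤ 2 * m + 1)
    (hpt : p / 2 ≤ m + t) (X : ℤ) :
    ∃ a ε : ℤ, |a| ≤ m ∧ |ε| ≤ 1 ∧ (p : ℤ) ∣ X - (a + ε * t) := by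
  obtain ⟨r, hr, hXr⟩ := exists_abs_le_half_dvd_sub hp X
  rw [abs_le] at hr
  obtain ⟨ε, hε, ha⟩ : ∃ ε : ℤ, |ε| ≤ 1 ∧ |r - ε * t| ≤ m := by
    rcases lt_or_ge (m : ℤ) r with hr_gt | hr_le
    · exact ⟨1, by norm_num, abs_le.mpr ⟨by omega, by omega⟩⟩
    rcases lt_or_ge r (-m) with hr_lt | hr_ge
    · exact ⟨-1, by norm_num, abs_le.mpr ⟨by omega, by omega⟩⟩
    · exact ⟨0, by norm_num, abs_le.mpr ⟨by omega, by omega⟩⟩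
  exact ⟨r - ε * t, ε, ha, hε, by simpa using hXr⟩

theorem exists_decomposition_mod_pow_succ {p m t : ℕ} (hp : 0 < p)
    (hres : ∀ X : ℤ, ∃ a ε : ℤ, |a| ≤ m ∧ |ε| ≤ 1 ∧ (p : ℤ) ∣ X - (a + ε * t))
    (r : ℕ) (X : ℤ) :
    ∃ (a ε : ℤ) (c : Fin r → ℤ), |a| ≤ ((m + r * (p / 2) : ℕ) : ℤ) ∧ |ε| ≤ 1 ∧
      (∀ j, |c j| ≤ (p / 2 : ℕ)) ∧
      (p : ℤ) ^ (r + 1) ∣ X - (a + ε * t + ∑ j, c j * ((p : ℤ) ^ ((j : ℕ) + 1) + 1)) := by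
  obtain ⟨a, ε, ha, hε, Y, hY⟩ := hres X
  obtain ⟨c, hc, hdigits⟩ := exists_balanced_digits hp r Y
  refine ⟨a - ∑ j, c j, ε, c, ?_, hε, hc, ?_⟩
  · calc |a - ∑ j, c j| ≤ |a| + ∑ j, |c j| :=
          (abs_sub _ _).trans (by gcongr; exact abs_sum_le_sum_abs _ _)
      _ ≤ m + ∑ _j : Fin r, ((p / 2 : ℕ) : ℤ) := add_le_add ha (sum_le_sum fun j _ => hc j)
      _ = (m + r * (p / 2) : ℕ) := by simp
  · have hsplit : X - (a - ∑ j, c j + ε * t + ∑ j : Fin r, c j * ((p : ℤ) ^ ((j : ℕ) + 1) + 1))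
        = p * (Y - ∑ j, c j * (p : ℤ) ^ (j : ℕ)) := by
      simp only [mul_sub, mul_sum, mul_add, pow_succ', mul_one, sum_add_distrib,
        mul_left_comm (c _)]
      linear_combination hY
    rw [hsplit, pow_succ']
    exact mul_dvd_mul_left _ hdigits

theorem wtAlpha_prime_pow_le {p m t : ℕ} (hp : 0 < p) (n₀ : ℕ) (k : (ZMod (p ^ (n₀ + 1)))ˣ)
    (hk : orderOf k = Nat.card (ZMod (p ^ (n₀ + 1)))ˣ) (ht : t.Coprime p)
    (hres : ∀ X : ℤ, ∃ a ε : ℤ, |a| ≤ m ∧ |ε| ≤ 1 ∧ (p : ℤ) ∣ X - (a + ε * t)) :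
    wtAlpha (p ^ (n₀ + 1)) k (orderOf k) ≤ m + 1 + 2 * n₀ * (p / 2) := by
  have : NeZero (p ^ (n₀ + 1)) := ⟨pow_ne_zero _ hp.ne'⟩
  let U : Fin (n₀ + 2) → ZMod (p ^ (n₀ + 1)) :=
    Fin.cons 1 (Fin.cons (t : ZMod (p ^ (n₀ + 1))) fun j => ((p ^ ((j : ℕ) + 1) + 1 : ℕ) : _))
  let w : Fin (n₀ + 2) → ℕ := Fin.cons (m + n₀ * (p / 2)) (Fin.cons 1 fun _ => p / 2)
  have hunit : ∀ l, IsUnit (U l) := by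
    refine Fin.cases isUnit_one (Fin.cases ?_ fun j => ?_)
    · exact (ZMod.isUnit_iff_coprime _ _).mpr (ht.pow_right _)
    · refine (ZMod.isUnit_iff_coprime _ _).mpr (Nat.Coprime.pow_right _ ?_)
      simp [pow_succ']
  have hcover : ∀ x : ZMod (p ^ (n₀ + 1)), ∃ c : Fin (n₀ + 2) → ℤ, (∀ l, |c l| ≤ w l) ∧
      x = ∑ l, (c l : ZMod (p ^ (n₀ + 1))) * U l := by
    intro x
    obtain ⟨X, rfl⟩ := ZMod.intCast_surjective x
    obtain ⟨a, ε, c, ha, hε, hc, hdvd⟩ := exists_decomposition_mod_pow_succ hp hres n₀ X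
    refine ⟨Fin.cons a (Fin.cons ε c), Fin.cases ha (Fin.cases hε hc), ?_⟩
    rw [← (ZMod.intCast_eq_intCast_iff_dvd_sub _ X _).mpr (by exact_mod_cast hdvd)]
    simp [U, Fin.sum_univ_succ, add_assoc]
  calc wtAlpha (p ^ (n₀ + 1)) k (orderOf k) ≤ ∑ l, w l := by
        refine wtAlpha_le_of_forall_eq_sum _ k _ U w (fun l => ?_) hcover
        obtain ⟨e, he, hke⟩ := exists_pow_lt_orderOf_eq hk (hunit l).unit
        exact ⟨e, he, by rw [hke, IsUnit.unit_spec]⟩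
    _ = m + 1 + 2 * n₀ * (p / 2) := by simp [w, Fin.sum_cons]; ring

/-- For an odd prime `p`, `n ≥ 1`, and a unit `k` mod `pⁿ` of maximal order
`p^{n−1}(p−1)`, the weight `wt(pⁿ, k; p^{n−1}(p−1))` is at most
`(p+3)/4 + (n−1)p` if `p ≡ 1 (mod 4)`, and at most `(p+5)/4 + (n−1)p` if
`p ≡ 3 (mod 4)`. -/
theorem wt_prime_power_upper_bound (p : ℕ) (hp : p.Prime) (hodd : Odd p)
    (n : ℕ) (hn : 1 ≤ n) (k : (ZMod (p ^ n))ˣ)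
    (hk : orderOf k = p ^ (n - 1) * (p - 1)) :
    (p % 4 = 1 →
      wtAlpha (p ^ n) k (p ^ (n - 1) * (p - 1)) ≤ (p + 3) / 4 + (n - 1) * p) ∧
    (p % 4 = 3 →
      wtAlpha (p ^ n) k (p ^ (n - 1) * (p - 1)) ≤ (p + 5) / 4 + (n - 1) * p) := by
  obtain ⟨n₀, rfl⟩ : ∃ n₀, n = n₀ + 1 := ⟨n - 1, by omega⟩
  simp only [Nat.add_sub_cancel] at hk ⊢
  have hp3 : 3 ≤ p := by rcases hodd with ⟨u, hu⟩; have := hp.two_le; omega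
  have hp_mod_two : p % 2 = 1 := Nat.odd_iff.mp hodd
  have : NeZero p := ⟨hp.ne_zero⟩
  have hcard : Nat.card (ZMod (p ^ (n₀ + 1)))ˣ = orderOf k := by
    rw [hk, Nat.card_eq_fintype_card, ZMod.card_units_eq_totient, Nat.totient_prime_pow_succ hp]
  -- `m + 1` is `(p + 3) / 4` resp. `(p + 5) / 4`, and `1 ≤ 2m - 1 < p`
  set m := (p + 1) / 4
  have hwt : wtAlpha (p ^ (n₀ + 1)) k (p ^ n₀ * (p - 1)) ≤ m + 1 + 2 * n₀ * (p / 2) := by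
    rw [← hk]
    refine wtAlpha_prime_pow_le hp.pos n₀ k hcard.symm (t := 2 * m - 1) ?_
      (exists_abs_le_add_mul_dvd_sub hp.pos (by omega) (by omega))
    exact (Nat.coprime_of_lt_prime (by omega) (by omega) hp).symm
  have hdigits : 2 * n₀ * (p / 2) ≤ n₀ * p := by
    rw [mul_comm 2, mul_assoc]
    exact Nat.mul_le_mul_left _ (Nat.mul_div_le p 2)
  constructor <;> intro <;> omega
end

section
/- Let G_{m,n,k} be the split metacyclic group, where k has multiplicative order α modulo n. For every g ∈ G_{m,n,k}, there exist an integer t with 1 ≤ t ≤ α and integers a₁,…,a_t, b₁,…,b_t such that g = x^{a₁}y^{b₁}x^{a₂}y^{b₂}⋯x^{a_t}y^{b_t} and Σ_{i=1}^t (|a_i| + |b_i|) = ‖g‖, where ‖g‖ is the word norm of g with respect to {x, x⁻¹, y, y⁻¹}. In other words, every element admits a geodesic representation with at most α syllables. -/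
/-!
Write elements as syllable words `x^{a₁} y^{b₁} ⋯ x^{a_t} y^{b_t}` of weight
`∑ (|aᵢ| + |bᵢ|)`; a geodesic is a word of weight `‖g‖`. Since `x` normalises `⟨y⟩`, a block
of syllables whose `x`-exponents sum to `s` equals `x^s y^d`, and `x^α` centralises `y` because
`k^α ≡ 1 (mod n)`; so a block with `α ∣ s` commutes with `y`. If a word has more than `α`
syllables, pigeonhole on the partial sums of its `x`-exponents modulo `α` yields such a nonempty
block `B` preceded by a syllable `x^a y^b`. Moving `y^b` across `B`, then merging `x^a` into the
first and `y^b` into the last syllable of `B`, removes a syllable without increasing the weight.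
-/

/-- Relators of the split metacyclic group `⟨x, y | x^m = y^n = 1, x⁻¹yx = y^k⟩`,
with generator `0` playing the role of `x` and `1` that of `y`. -/
def metacyclicRels (m n k : ℕ) : Set (FreeGroup (Fin 2)) :=
  { FreeGroup.of 0 ^ m, FreeGroup.of 1 ^ n,
    (FreeGroup.of 0)⁻¹ * FreeGroup.of 1 * FreeGroup.of 0 * (FreeGroup.of 1 ^ k)⁻¹ }

/-- The split metacyclic group `G_{m,n,k} = ℤ_m ⋉_k ℤ_n
  = ⟨x, y | x^m = y^n = 1, x⁻¹yx = y^k⟩`. -/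
abbrev SplitMetacyclic (m n k : ℕ) : Type := PresentedGroup (metacyclicRels m n k)

/-- The generator `x` of `G_{m,n,k}`. -/
def xgen (m n k : ℕ) : SplitMetacyclic m n k := PresentedGroup.of 0

/-- The generator `y` of `G_{m,n,k}`. -/
def ygen (m n k : ℕ) : SplitMetacyclic m n k := PresentedGroup.of 1

/-- The word norm of `g` with respect to a set `S` of generators:
the least `t` such that `g` is a product of `t` elements of `S`. -/
noncomputable def wordNorm {G : Type*} [Group G] (S : Set G) (g : G) : ℕ :=
  sInf { t | ∃ w : List G, (∀ u ∈ w, u ∈ S) ∧ w.length = t ∧ w.prod = g }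

/-- The diameter of a group with respect to a set `S` of generators. -/
noncomputable def diam {G : Type*} [Group G] (S : Set G) : ℕ :=
  ⨆ g : G, wordNorm S g

/-- The generating set `{x, x⁻¹, y, y⁻¹}` of `G_{m,n,k}`. -/
def genSet (m n k : ℕ) : Set (SplitMetacyclic m n k) :=
  {xgen m n k, (xgen m n k)⁻¹, ygen m n k, (ygen m n k)⁻¹}

open Subgroup

section Syllables

variable {G : Type*} [Group G] (x y : G)

def syllableProd (l : List (ℤ × ℤ)) : G := (l.map fun p => x ^ p.1 * y ^ p.2).prod

def syllableWeight (l : List (ℤ × ℤ)) : ℕ := (l.map fun p => p.1.natAbs + p.2.natAbs).sum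

@[simp] theorem syllableProd_nil : syllableProd x y [] = 1 := rfl

@[simp] theorem syllableProd_cons (p : ℤ × ℤ) (l : List (ℤ × ℤ)) :
    syllableProd x y (p :: l) = x ^ p.1 * y ^ p.2 * syllableProd x y l := by
  simp [syllableProd]

@[simp] theorem syllableProd_append (l₁ l₂ : List (ℤ × ℤ)) :
    syllableProd x y (l₁ ++ l₂) = syllableProd x y l₁ * syllableProd x y l₂ := by
  simp [syllableProd]

@[simp] theorem syllableWeight_nil : syllableWeight [] = 0 := rfl

@[simp] theorem syllableWeight_cons (p : ℤ × ℤ) (l : List (ℤ × ℤ)) :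
    syllableWeight (p :: l) = p.1.natAbs + p.2.natAbs + syllableWeight l := by
  simp [syllableWeight]

@[simp] theorem syllableWeight_append (l₁ l₂ : List (ℤ × ℤ)) :
    syllableWeight (l₁ ++ l₂) = syllableWeight l₁ + syllableWeight l₂ := by
  simp [syllableWeight]

theorem exists_syllableProd_eq_zpow_mul_mul_zpow {l : List (ℤ × ℤ)} (hl : l ≠ [])
    (a b : ℤ) :
    ∃ l' : List (ℤ × ℤ), l'.length = l.length ∧
      syllableProd x y l' = x ^ a * syllableProd x y l * y ^ b ∧
      syllableWeight l' ≤ a.natAbs + syllableWeight l + b.natAbs := by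
  obtain ⟨L, q, rfl⟩ := (List.eq_nil_or_concat l).resolve_left hl
  rw [List.concat_eq_append]
  cases L with
  | nil =>
    refine ⟨[(a + q.1, q.2 + b)], rfl, by simp [zpow_add, mul_assoc], ?_⟩
    simp only [syllableWeight_cons, syllableWeight_nil, List.nil_append]
    have := Int.natAbs_add_le a q.1
    have := Int.natAbs_add_le q.2 b
    omega
  | cons p L =>
    refine ⟨(a + p.1, p.2) :: (L ++ [(q.1, q.2 + b)]), by simp, ?_, ?_⟩
    · simp [zpow_add, mul_assoc]
    · simp only [syllableWeight_cons, syllableWeight_append, syllableWeight_nil,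
        List.cons_append]
      have := Int.natAbs_add_le a p.1
      have := Int.natAbs_add_le q.2 b
      omega

end Syllables

theorem exists_infix_ne_nil_dvd_sum {β : Type*} (f : β → ℤ) {α : ℕ} (hα : 0 < α)
    {l : List β} (hl : α ≤ l.length) :
    ∃ A B D : List β, l = A ++ B ++ D ∧ B ≠ [] ∧ (α : ℤ) ∣ (B.map f).sum := by
  have : NeZero α := ⟨hα.ne'⟩
  obtain ⟨i, j, hij, hsum⟩ := Fintype.exists_ne_map_eq_of_card_lt
    (fun i : Fin (α + 1) => (((l.take i).map f).sum : ZMod α)) (by simp)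
  wlog hlt : i < j generalizing i j
  · exact this j i hij.symm hsum.symm (lt_of_le_of_ne (not_lt.mp hlt) hij.symm)
  have htake : l.take i ++ (l.take j).drop i = l.take j := by
    conv_rhs => rw [← List.take_append_drop i (l.take j)]
    rw [List.take_take, Nat.min_eq_left hlt.le]
  refine ⟨l.take i, (l.take j).drop i, l.drop j, by rw [htake, List.take_append_drop], ?_, ?_⟩
  · apply List.ne_nil_of_length_pos
    simp only [List.length_drop, List.length_take]
    omega
  · have := (ZMod.intCast_eq_intCast_iff_dvd_sub _ _ _).mp hsum
    rwa [← htake, List.map_append, List.sum_append, add_sub_cancel_left] at this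

section Normalizer

variable {G : Type*} [Group G] {x y : G} {k α : ℕ}

theorem inv_pow_mul_mul_pow (hconj : x⁻¹ * y * x = y ^ k) (j : ℕ) :
    (x ^ j)⁻¹ * y * x ^ j = y ^ k ^ j := by
  induction j with
  | zero => simp
  | succ j ih =>
    calc (x ^ (j + 1))⁻¹ * y * x ^ (j + 1) = x⁻¹ * ((x ^ j)⁻¹ * y * x ^ j) * x⁻¹⁻¹ := by
          group
      _ = (x⁻¹ * y * x⁻¹⁻¹) ^ k ^ j := by rw [ih, conj_pow]
      _ = y ^ k ^ (j + 1) := by rw [inv_inv, hconj, ← pow_mul, pow_succ']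

theorem commute_pow_of_inv_mul_mul (hconj : x⁻¹ * y * x = y ^ k) (hα : y ^ k ^ α = y) :
    Commute (x ^ α) y :=
  calc x ^ α * y = x ^ α * ((x ^ α)⁻¹ * y * x ^ α) := by
        rw [inv_pow_mul_mul_pow hconj, hα]
    _ = y * x ^ α := by group

theorem mem_normalizer_zpowers_of_inv_mul_mul (hconj : x⁻¹ * y * x = y ^ k)
    (hα : y ^ k ^ α = y) (hα0 : 0 < α) : x ∈ normalizer (zpowers y : Set G) := by
  -- `x⁻¹` acts on `⟨y⟩` as `x ^ (α - 1)` does, since `x ^ α` centralises `y`.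
  have hxy : x * y * x⁻¹ = y ^ k ^ (α - 1) := by
    rw [← inv_pow_mul_mul_pow hconj]
    calc x * y * x⁻¹ = (x ^ (α - 1))⁻¹ * (x ^ α * y * (x ^ α)⁻¹) * x ^ (α - 1) := by
          rw [← pow_sub_one_mul hα0.ne']; group
      _ = (x ^ (α - 1))⁻¹ * y * x ^ (α - 1) := by
          rw [(commute_pow_of_inv_mul_mul hconj hα).eq, mul_inv_cancel_right]
  rw [mem_normalizer_iff'']
  intro g
  constructor
  · rintro ⟨b, rfl⟩
    refine ⟨k * b, ?_⟩
    dsimp only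
    rw [zpow_mul, zpow_natCast, ← hconj]
    simpa using conj_zpow (a := x⁻¹) (b := y) (i := b)
  · rintro ⟨b, hb⟩
    refine ⟨(k ^ (α - 1) : ℕ) * b, ?_⟩
    dsimp only at hb ⊢
    rw [zpow_mul, zpow_natCast, ← hxy, conj_zpow, hb]
    group

variable (hx : x ∈ normalizer (zpowers y : Set G))
include hx

theorem inv_zpow_sum_mul_syllableProd_mem (l : List (ℤ × ℤ)) :
    (x ^ (l.map Prod.fst).sum)⁻¹ * syllableProd x y l ∈ zpowers y := by
  induction l with
  | nil => simp
  | cons p l ih =>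
    have hconj :
        (x ^ (l.map Prod.fst).sum)⁻¹ * y ^ p.2 * x ^ (l.map Prod.fst).sum ∈ zpowers y :=
      (mem_normalizer_iff''.mp (zpow_mem hx _) _).mp (zpow_mem_zpowers y p.2)
    convert mul_mem hconj ih using 1
    simp only [List.map_cons, List.sum_cons, syllableProd_cons]
    group

theorem commute_syllableProd_zpow (hcomm : Commute (x ^ α) y) {l : List (ℤ × ℤ)}
    (hdvd : (α : ℤ) ∣ (l.map Prod.fst).sum) (b : ℤ) :
    Commute (syllableProd x y l) (y ^ b) := by
  obtain ⟨d, hd⟩ := inv_zpow_sum_mul_syllableProd_mem hx l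
  obtain ⟨c, hc⟩ := hdvd
  rw [hc, eq_comm, inv_mul_eq_iff_eq_mul] at hd
  rw [hd, zpow_mul, zpow_natCast]
  exact ((hcomm.zpow_left c).zpow_right b).mul_left (Commute.zpow_zpow_self y d b)

end Normalizer

section Shortening

variable {G : Type*} [Group G] {x y : G} {α : ℕ}
  (hx : x ∈ normalizer (zpowers y : Set G)) (hcomm : Commute (x ^ α) y) (hα : 0 < α)
include hx hcomm hα

theorem exists_syllableProd_eq_length_succ {l : List (ℤ × ℤ)} (hl : α < l.length) :
    ∃ l' : List (ℤ × ℤ), syllableProd x y l' = syllableProd x y l ∧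
      syllableWeight l' ≤ syllableWeight l ∧ l'.length + 1 = l.length := by
  obtain ⟨p, tl, rfl⟩ := List.exists_cons_of_length_pos (by omega : 0 < l.length)
  obtain ⟨A, B, D, rfl, hB, hdvd⟩ :=
    exists_infix_ne_nil_dvd_sum Prod.fst hα (by simpa using hl : α ≤ tl.length)
  -- `q` is the syllable just before the block `B`; `y ^ q.2` commutes past `B`
  obtain ⟨A₀, q, hq⟩ :=
    (List.eq_nil_or_concat (p :: A)).resolve_left (List.cons_ne_nil _ _)
  rw [List.concat_eq_append] at hq
  have hl : p :: (A ++ B ++ D) = A₀ ++ q :: (B ++ D) := by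
    rw [← List.cons_append, ← List.cons_append, hq]; simp
  obtain ⟨B', hlen, hprod, hwt⟩ := exists_syllableProd_eq_zpow_mul_mul_zpow x y hB q.1 q.2
  refine ⟨A₀ ++ B' ++ D, ?_, ?_, ?_⟩
  · rw [hl]
    simp only [syllableProd_append, syllableProd_cons, hprod, mul_assoc,
      (commute_syllableProd_zpow hx hcomm hdvd q.2).eq]
  · rw [hl]
    simp only [syllableWeight_append, syllableWeight_cons]
    omega
  · rw [hl]
    simp only [List.length_append, List.length_cons]
    omega

theorem exists_syllableProd_eq_length_eq_min (l : List (ℤ × ℤ)) :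
    ∃ l' : List (ℤ × ℤ), syllableProd x y l' = syllableProd x y l ∧
      syllableWeight l' ≤ syllableWeight l ∧ l'.length = min l.length α := by
  by_cases hl : l.length ≤ α
  · exact ⟨l, rfl, le_rfl, (min_eq_left hl).symm⟩
  obtain ⟨l₁, hprod₁, hwt₁, hlen₁⟩ :=
    exists_syllableProd_eq_length_succ hx hcomm hα (not_le.mp hl)
  obtain ⟨l₂, hprod₂, hwt₂, hlen₂⟩ := exists_syllableProd_eq_length_eq_min l₁
  exact ⟨l₂, hprod₂.trans hprod₁, hwt₂.trans hwt₁, by omega⟩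
termination_by l.length

end Shortening

section WordNorm

variable {G : Type*} [Group G]

theorem wordNorm_prod_le_length {S : Set G} {w : List G} (hw : ∀ u ∈ w, u ∈ S) :
    wordNorm S w.prod ≤ w.length :=
  Nat.sInf_le ⟨w, hw, rfl, rfl⟩

theorem exists_length_eq_wordNorm {S : Set G} {g : G} (hg : g ∈ Submonoid.closure S) :
    ∃ w : List G, (∀ u ∈ w, u ∈ S) ∧ w.length = wordNorm S g ∧ w.prod = g := by
  obtain ⟨w, hw, rfl⟩ := Submonoid.exists_list_of_mem_closure hg
  show wordNorm S w.prod ∈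
    {t | ∃ w' : List G, (∀ u ∈ w', u ∈ S) ∧ w'.length = t ∧ w'.prod = w.prod}
  exact Nat.sInf_mem ⟨_, w, hw, rfl, rfl⟩

theorem exists_list_prod_eq_zpow (z : G) (a : ℤ) :
    ∃ w : List G, (∀ u ∈ w, u = z ∨ u = z⁻¹) ∧ w.length = a.natAbs ∧ w.prod = z ^ a := by
  obtain ⟨n, rfl | rfl⟩ := Int.eq_nat_or_neg a
  · exact ⟨List.replicate n z, fun u hu => .inl (List.eq_of_mem_replicate hu), by simp,
      by simp⟩
  · exact ⟨List.replicate n z⁻¹, fun u hu => .inr (List.eq_of_mem_replicate hu), by simp,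
      by simp⟩

variable (x y : G)

theorem mem_submonoidClosure_of_mem_closure_pair {g : G} (hg : g ∈ closure {x, y}) :
    g ∈ Submonoid.closure {x, x⁻¹, y, y⁻¹} := by
  have : (closure {x, y}).toSubmonoid = Submonoid.closure {x, x⁻¹, y, y⁻¹} := by
    rw [closure_toSubmonoid]
    congr 1
    ext
    simp only [Set.mem_union, Set.mem_insert_iff, Set.mem_singleton_iff, Set.mem_inv]
    aesop
  exact this ▸ hg

theorem wordNorm_syllableProd_le (l : List (ℤ × ℤ)) :
    wordNorm {x, x⁻¹, y, y⁻¹} (syllableProd x y l) ≤ syllableWeight l := by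
  suffices ∃ w : List G, (∀ u ∈ w, u ∈ ({x, x⁻¹, y, y⁻¹} : Set G)) ∧
      w.length = syllableWeight l ∧ w.prod = syllableProd x y l by
    obtain ⟨w, hw, hlen, hprod⟩ := this
    exact hprod ▸ hlen ▸ wordNorm_prod_le_length hw
  induction l with
  | nil => exact ⟨[], by simp, rfl, rfl⟩
  | cons p l ih =>
    obtain ⟨w, hw, hlen, hprod⟩ := ih
    obtain ⟨wx, hwx, hlenx, hprodx⟩ := exists_list_prod_eq_zpow x p.1
    obtain ⟨wy, hwy, hleny, hprody⟩ := exists_list_prod_eq_zpow y p.2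
    refine ⟨wx ++ wy ++ w, ?_, by simp [hlenx, hleny, hlen, add_assoc],
      by simp [hprodx, hprody, hprod, mul_assoc]⟩
    simp only [List.mem_append]
    rintro u ((hu | hu) | hu)
    · rcases hwx u hu with rfl | rfl <;> simp
    · rcases hwy u hu with rfl | rfl <;> simp
    · exact hw u hu

theorem exists_syllableProd_eq_wordNorm {g : G}
    (hg : g ∈ Submonoid.closure {x, x⁻¹, y, y⁻¹}) :
    ∃ l : List (ℤ × ℤ), syllableProd x y l = g ∧
      syllableWeight l = wordNorm {x, x⁻¹, y, y⁻¹} g := by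
  obtain ⟨w, hw, hlen, rfl⟩ := exists_length_eq_wordNorm hg
  rw [← hlen]
  clear hlen hg
  induction w with
  | nil => exact ⟨[], rfl, rfl⟩
  | cons u w ih =>
    obtain ⟨l, hprod, hwt⟩ := ih fun v hv => hw v (.tail _ hv)
    obtain ⟨p, hp, hwt₁⟩ :
        ∃ p : ℤ × ℤ, x ^ p.1 * y ^ p.2 = u ∧ p.1.natAbs + p.2.natAbs = 1 := by
      rcases hw u (.head _) with rfl | rfl | rfl | rfl
      exacts [⟨(1, 0), by simp, rfl⟩, ⟨(-1, 0), by simp, rfl⟩, ⟨(0, 1), by simp, rfl⟩,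
        ⟨(0, -1), by simp, rfl⟩]
    exact ⟨p :: l, by simp [hp, hprod], by simp [hwt, hwt₁, add_comm]⟩

end WordNorm

theorem exists_geodesic_syllables {G : Type*} [Group G] {x y : G} {α : ℕ}
    (hx : x ∈ normalizer (zpowers y : Set G)) (hcomm : Commute (x ^ α) y) (hα : 0 < α) {g : G}
    (hg : g ∈ Submonoid.closure {x, x⁻¹, y, y⁻¹}) :
    ∃ l : List (ℤ × ℤ), 1 ≤ l.length ∧ l.length ≤ α ∧ syllableProd x y l = g ∧
      syllableWeight l = wordNorm {x, x⁻¹, y, y⁻¹} g := by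
  obtain ⟨l₀, hprod₀, hwt₀⟩ := exists_syllableProd_eq_wordNorm x y hg
  -- the padding syllable `x ^ 0 * y ^ 0` keeps the word nonempty
  obtain ⟨l, hprod, hwt, hlen⟩ :=
    exists_syllableProd_eq_length_eq_min hx hcomm hα (l₀ ++ [(0, 0)])
  simp only [syllableProd_append, syllableProd_cons, syllableProd_nil, syllableWeight_append,
    syllableWeight_cons, syllableWeight_nil, hprod₀, hwt₀, List.length_append, List.length_cons,
    List.length_nil, zpow_zero, mul_one, Int.natAbs_zero, add_zero] at hprod hwt hlen
  refine ⟨l, by omega, by omega, hprod, le_antisymm hwt ?_⟩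
  simpa only [hprod] using wordNorm_syllableProd_le x y l

namespace SplitMetacyclic

variable (m n k : ℕ)

theorem ygen_pow_n : ygen m n k ^ n = 1 :=
  (map_pow (PresentedGroup.mk _) (FreeGroup.of 1) n).symm.trans
    (PresentedGroup.one_of_mem (by simp [metacyclicRels]))

theorem xgen_inv_mul_ygen_mul_xgen :
    (xgen m n k)⁻¹ * ygen m n k * xgen m n k = ygen m n k ^ k := by
  have h := PresentedGroup.mk_eq_mk_of_mul_inv_mem (rels := metacyclicRels m n k)
    (x := (FreeGroup.of 0)⁻¹ * FreeGroup.of 1 * FreeGroup.of 0) (y := FreeGroup.of 1 ^ k)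
    (by simp [metacyclicRels])
  rwa [map_mul, map_mul, map_inv, map_pow] at h

theorem ygen_pow_pow_orderOf (hk : Nat.Coprime k n) :
    ygen m n k ^ k ^ orderOf (ZMod.unitOfCoprime k hk) = ygen m n k := by
  have h := congrArg Units.val (pow_orderOf_eq_one (ZMod.unitOfCoprime k hk))
  rw [Units.val_pow_eq_pow_val, ZMod.coe_unitOfCoprime, Units.val_one, ← Nat.cast_pow,
    ← Nat.cast_one, ZMod.natCast_eq_natCast_iff] at h
  conv_rhs => rw [← pow_one (ygen m n k)]
  exact pow_eq_pow_iff_modEq.mpr (h.of_dvd (orderOf_dvd_of_pow_eq_one (ygen_pow_n m n k)))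

theorem mem_closure_genSet (g : SplitMetacyclic m n k) :
    g ∈ Submonoid.closure (genSet m n k) := by
  refine mem_submonoidClosure_of_mem_closure_pair _ _ ?_
  rw [eq_top_iff.mpr (le_of_eq_of_le (PresentedGroup.closure_range_of _).symm (closure_mono ?_))]
  · trivial
  rintro _ ⟨i, rfl⟩
  fin_cases i
  exacts [.inl rfl, .inr rfl]

end SplitMetacyclic

theorem geodesic_syllable_bound_general (m n k : ℕ)
    (hk : Nat.Coprime k n) (α : ℕ)
    (hα : orderOf (ZMod.unitOfCoprime k hk) = α)
    (g : SplitMetacyclic m n k) :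
    ∃ t : ℕ, 1 ≤ t ∧ t ≤ α ∧ ∃ a b : Fin t → ℤ,
      (List.ofFn fun i => xgen m n k ^ a i * ygen m n k ^ b i).prod = g ∧
      ∑ i, ((a i).natAbs + (b i).natAbs) = wordNorm (genSet m n k) g := by
  subst hα
  have hconj := SplitMetacyclic.xgen_inv_mul_ygen_mul_xgen m n k
  have hyα := SplitMetacyclic.ygen_pow_pow_orderOf m n k hk
  obtain ⟨l, hpos, hlen, hprod, hwt⟩ := exists_geodesic_syllables
    (mem_normalizer_zpowers_of_inv_mul_mul hconj hyα (orderOf_pos _))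
    (commute_pow_of_inv_mul_mul hconj hyα) (orderOf_pos _)
    (SplitMetacyclic.mem_closure_genSet m n k g)
  refine ⟨l.length, hpos, hlen, fun i => l[i].1, fun i => l[i].2, ?_, ?_⟩
  · exact (congrArg List.prod (List.ofFn_getElem_eq_map l _)).trans hprod
  · rw [← List.sum_ofFn]
    exact (congrArg List.sum (List.ofFn_getElem_eq_map l _)).trans hwt

/-- Every element of `G_{m,n,k}` admits a geodesic representation
`x^{a₁}y^{b₁}⋯x^{a_t}y^{b_t}` with at most `α = ord(k)` syllables. -/
theorem geodesic_syllable_bound (m n k : ℕ) (hm : 2 ≤ m) (hn : 3 ≤ n)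
    (hk : Nat.Coprime k n) (hkm : k ^ m ≡ 1 [MOD n]) (α : ℕ)
    (hα : orderOf (ZMod.unitOfCoprime k hk) = α)
    (g : SplitMetacyclic m n k) :
    ∃ t : ℕ, 1 ≤ t ∧ t ≤ α ∧ ∃ a b : Fin t → ℤ,
      (List.ofFn fun i => xgen m n k ^ a i * ygen m n k ^ b i).prod = g ∧
      ∑ i, ((a i).natAbs + (b i).natAbs) = wordNorm (genSet m n k) g :=
  geodesic_syllable_bound_general m n k hk α hα g
end
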